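/- Define h_KS(N, ΔV) = (1/T₀(N,ΔV))·ln(1/ΔV), where T₀(N,ΔV) > 0 is the unique solution of (N+1) = ΔV·∑_{k=0}^N exp(2kT₀). Then for fixed ΔV ∈ (0,1), h_KS(N, ΔV)/N is bounded: 2·ln(1/ΔV)/ln((N+1)/ΔV) ≤ h_KS(N,ΔV)/N. -/
import Mathlib


theorem KS_entropy_linear_lower_bound (N : ℕ) (hN : 1 ≤ N) (ΔV T₀ : ℝ)
    (hV : 0 < ΔV) (hV1 : ΔV < 1) (hT₀ : 0 < T₀)
    (heq : (N : ℝ) + 1 = ΔV * ∑ k ∈ Finset.range (N + 1), Real.exp (2 * k * T₀)) :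
    2 * Real.log (1 / ΔV) / Real.log ((N + 1) / ΔV)
      ≤ ((1 / T₀) * Real.log (1 / ΔV)) / N := by
  have hNpos : (0 : ℝ) < N := by exact_mod_cast hN
  have hL : 0 < Real.log (1 / ΔV) := Real.log_pos (by rw [lt_div_iff₀ hV]; linarith)
  -- exp(2NT₀) ≤ (N+1)/ΔV
  have hsum : Real.exp (2 * N * T₀) ≤ ∑ k ∈ Finset.range (N + 1), Real.exp (2 * k * T₀) :=
    Finset.single_le_sum (f := fun k : ℕ => Real.exp (2 * (k:ℝ) * T₀)) (fun k _ => (Real.exp_pos _).le) (Finset.self_mem_range_succ N)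
  have hkey : Real.exp (2 * N * T₀) ≤ ((N : ℝ) + 1) / ΔV := by
    rw [le_div_iff₀ hV, mul_comm]
    rw [heq]
    exact mul_le_mul_of_nonneg_left hsum hV.le
  have hdivpos : (0:ℝ) < ((N : ℝ) + 1) / ΔV := by positivity
  have hlogkey : 2 * N * T₀ ≤ Real.log (((N : ℝ) + 1) / ΔV) := by
    have := Real.log_le_log (Real.exp_pos _) hkey
    rwa [Real.log_exp] at this
  have hXpos : 0 < Real.log (((N : ℝ) + 1) / ΔV) :=
    lt_of_lt_of_le (by positivity) hlogkey
  have h1 : 2 * Real.log (1 / ΔV) / Real.log (((N : ℝ) + 1) / ΔV)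
      ≤ 2 * Real.log (1 / ΔV) / (2 * N * T₀) :=
    div_le_div_of_nonneg_left (by positivity) (by positivity) hlogkey
  calc 2 * Real.log (1 / ΔV) / Real.log (((N : ℝ) + 1) / ΔV)
      ≤ 2 * Real.log (1 / ΔV) / (2 * N * T₀) := h1
    _ = ((1 / T₀) * Real.log (1 / ΔV)) / N := by
        field_simp
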